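/- Let X ∈ ℝ^{n×n} have all entries nonzero and satisfy social balance, with M(t) = max_{i,j}|X(t)_ij| and m(t) = min_{i,j}|X(t)_ij| for the homophily dynamics X(t+1) = diag(|X(t)|1_n)⁻¹ X(t) X(t)ᵀ starting at X(0) = X. Then M(t+2) − m(t+2) ≤ (1 − m(t)²/(n² M(t)²)) · (M(t) − m(t)) for all t ≥ 0; consequently M(t) − m(t) → 0 exponentially and X(t) converges to a matrix of the form α b bᵀ with α > 0 and b = sign of the first row of X. -/

import Mathlib

noncomputable def fHbM {n : ℕ} (X : Matrix (Fin n) (Fin n) ℝ) : Matrix (Fin n) (Fin n) ℝ :=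
  fun i j => (∑ k, X i k * X j k) / (∑ k, |X i k|)

noncomputable def maxNorm {n : ℕ} (X : Matrix (Fin n) (Fin n) ℝ) : ℝ :=
  ⨆ i, ⨆ j, |X i j|

noncomputable def minNorm {n : ℕ} (X : Matrix (Fin n) (Fin n) ℝ) : ℝ :=
  ⨅ i, ⨅ j, |X i j|

section norms
variable {n : ℕ} (X : Matrix (Fin n) (Fin n) ℝ)

lemma abs_le_maxNorm (i j : Fin n) : |X i j| ≤ maxNorm X := by
  have h1 : |X i j| ≤ ⨆ j, |X i j| :=
    le_ciSup (f := fun j => |X i j|) (Set.Finite.bddAbove (Set.finite_range _)) j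
  exact h1.trans (le_ciSup (f := fun i => ⨆ j, |X i j|)
    (Set.Finite.bddAbove (Set.finite_range _)) i)

lemma minNorm_le_abs (i j : Fin n) : minNorm X ≤ |X i j| := by
  have h1 : (⨅ j, |X i j|) ≤ |X i j| :=
    ciInf_le (f := fun j => |X i j|) (Set.Finite.bddBelow (Set.finite_range _)) j
  exact le_trans (ciInf_le (f := fun i => ⨅ j, |X i j|)
    (Set.Finite.bddBelow (Set.finite_range _)) i) h1

lemma maxNorm_le (hn : 0 < n) {B : ℝ} (h : ∀ i j, |X i j| ≤ B) : maxNorm X ≤ B := by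
  haveI : Nonempty (Fin n) := ⟨⟨0, hn⟩⟩
  exact ciSup_le fun i => ciSup_le (h i)

lemma le_minNorm (hn : 0 < n) {b : ℝ} (h : ∀ i j, b ≤ |X i j|) : b ≤ minNorm X := by
  haveI : Nonempty (Fin n) := ⟨⟨0, hn⟩⟩
  exact le_ciInf fun i => le_ciInf (h i)

lemma exists_minNorm (hn : 0 < n) : ∃ a b : Fin n, minNorm X = |X a b| := by
  haveI : Nonempty (Fin n) := ⟨⟨0, hn⟩⟩
  obtain ⟨⟨a, b⟩, hab⟩ := Finite.exists_min (fun p : Fin n × Fin n => |X p.1 p.2|)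
  exact ⟨a, b, le_antisymm (minNorm_le_abs X a b)
    (le_minNorm X hn fun i j => hab (i, j))⟩

lemma minNorm_le_maxNorm (hn : 0 < n) : minNorm X ≤ maxNorm X :=
  (minNorm_le_abs X ⟨0, hn⟩ ⟨0, hn⟩).trans (abs_le_maxNorm X ⟨0, hn⟩ ⟨0, hn⟩)

end norms

section pos
variable {n : ℕ}

lemma sum_abs_eq (Y : Matrix (Fin n) (Fin n) ℝ) (hY : ∀ i j, 0 < Y i j) (i : Fin n) :
    (∑ k, |Y i k|) = ∑ k, Y i k :=
  Finset.sum_congr rfl fun k _ => abs_of_pos (hY i k)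

lemma sum_row_pos (hn : 0 < n) (Y : Matrix (Fin n) (Fin n) ℝ) (hY : ∀ i j, 0 < Y i j)
    (i : Fin n) : 0 < ∑ k, Y i k := by
  haveI : Nonempty (Fin n) := ⟨⟨0, hn⟩⟩
  exact Finset.sum_pos (fun k _ => hY i k) Finset.univ_nonempty

lemma sum_row_le (Y : Matrix (Fin n) (Fin n) ℝ) {M0 : ℝ} (hM : ∀ i j, Y i j ≤ M0)
    (i : Fin n) : (∑ k, Y i k) ≤ n * M0 := by
  calc (∑ k, Y i k) ≤ ∑ _k : Fin n, M0 := Finset.sum_le_sum fun k _ => hM i k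
  _ = n * M0 := by simp [Finset.sum_const, Finset.card_univ, nsmul_eq_mul]

lemma key_lower (hn : 0 < n) (Y : Matrix (Fin n) (Fin n) ℝ) (hY : ∀ i j, 0 < Y i j)
    {m0 : ℝ} (hm : ∀ i j, m0 ≤ Y i j) (i j : Fin n) : m0 ≤ fHbM Y i j := by
  have hS : 0 < ∑ k, Y i k := sum_row_pos hn Y hY i
  have hnum : (∑ k, Y i k) * m0 ≤ ∑ k, Y i k * Y j k := by
    rw [Finset.sum_mul]
    exact Finset.sum_le_sum fun k _ =>
      mul_le_mul_of_nonneg_left (hm j k) (hY i k).le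
  unfold fHbM
  rw [sum_abs_eq Y hY i, le_div_iff₀ hS]
  linarith [hnum]

lemma key_upper (hn : 0 < n) (Y : Matrix (Fin n) (Fin n) ℝ) (hY : ∀ i j, 0 < Y i j)
    {M0 m0 B : ℝ} (hM : ∀ i j, Y i j ≤ M0) (hm0 : 0 < m0) (hm : ∀ i j, m0 ≤ Y i j)
    (j k0 : Fin n) (hB : Y j k0 ≤ B) (hBM : B ≤ M0) (i : Fin n) :
    fHbM Y i j ≤ M0 - (m0 * (M0 - B)) / (n * M0) := by
  have hS : 0 < ∑ k, Y i k := sum_row_pos hn Y hY i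
  have hSle : (∑ k, Y i k) ≤ n * M0 := sum_row_le Y hM i
  have hM0 : 0 < M0 := lt_of_lt_of_le (hY i j) (hM i j)
  have hnM : (0:ℝ) < n * M0 := by positivity
  have hc : 0 ≤ m0 * (M0 - B) := mul_nonneg hm0.le (by linarith)
  have hnum : (∑ k, Y i k * Y j k) ≤ (∑ k, Y i k) * M0 - m0 * (M0 - B) := by
    have h1 : (∑ k, Y i k * Y j k) = (∑ k, Y i k) * M0 - ∑ k, Y i k * (M0 - Y j k) := by
      rw [Finset.sum_mul, ← Finset.sum_sub_distrib]
      exact Finset.sum_congr rfl fun k _ => by ring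
    rw [h1]
    have h2 : m0 * (M0 - B) ≤ ∑ k, Y i k * (M0 - Y j k) := by
      have h3 : m0 * (M0 - B) ≤ Y i k0 * (M0 - Y j k0) :=
        mul_le_mul (hm i k0) (by linarith) (by linarith) (hY i k0).le
      exact h3.trans (Finset.single_le_sum
        (f := fun k => Y i k * (M0 - Y j k))
        (fun k _ => mul_nonneg (hY i k).le (by linarith [hM j k])) (Finset.mem_univ k0))
    linarith
  unfold fHbM
  rw [sum_abs_eq Y hY i, div_le_iff₀ hS]
  have hfrac : (m0 * (M0 - B)) / (n * M0) * (∑ k, Y i k) ≤ m0 * (M0 - B) := by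
    rw [div_mul_eq_mul_div, div_le_iff₀ hnM]
    exact mul_le_mul_of_nonneg_left hSle hc
  nlinarith [hnum, hfrac]

lemma fHbM_pos (hn : 0 < n) (Y : Matrix (Fin n) (Fin n) ℝ) (hY : ∀ i j, 0 < Y i j)
    (i j : Fin n) : 0 < fHbM Y i j := by
  obtain ⟨a, b, hab⟩ := exists_minNorm Y hn
  have hm : 0 < minNorm Y := by rw [hab]; exact abs_pos.2 (hY a b).ne'
  have : ∀ i' j', minNorm Y ≤ Y i' j' := fun i' j' =>
    (minNorm_le_abs Y i' j').trans_eq (abs_of_pos (hY i' j'))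
  exact lt_of_lt_of_le hm (key_lower hn Y hY this i j)

end pos

section steps
variable {n : ℕ}

lemma fHbM_bounds (hn : 0 < n) (Y : Matrix (Fin n) (Fin n) ℝ) (hY : ∀ i j, 0 < Y i j) :
    (∀ i j, 0 < fHbM Y i j) ∧ minNorm Y ≤ minNorm (fHbM Y) ∧
      maxNorm (fHbM Y) ≤ maxNorm Y := by
  have hmY : ∀ i j, minNorm Y ≤ Y i j := fun i j =>
    (minNorm_le_abs Y i j).trans_eq (abs_of_pos (hY i j))
  have hMY : ∀ i j, Y i j ≤ maxNorm Y := fun i j =>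
    (le_abs_self _).trans (abs_le_maxNorm Y i j)
  have hpos := fHbM_pos hn Y hY
  refine ⟨hpos, ?_, ?_⟩
  · exact le_minNorm _ hn fun i j => (key_lower hn Y hY hmY i j).trans_eq
      (abs_of_pos (hpos i j)).symm
  · refine maxNorm_le _ hn fun i j => ?_
    rw [abs_of_pos (hpos i j)]
    obtain ⟨a, b, hab⟩ := exists_minNorm Y hn
    have hm0 : 0 < minNorm Y := by rw [hab]; exact abs_pos.2 (hY a b).ne'
    have := key_upper hn Y hY hMY hm0 hmY j j (hMY j j) le_rfl i
    rw [sub_self, mul_zero, zero_div, sub_zero] at this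
    exact this

lemma two_step (hn : 0 < n) (Y : Matrix (Fin n) (Fin n) ℝ) (hY : ∀ i j, 0 < Y i j) :
    maxNorm (fHbM (fHbM Y)) - minNorm (fHbM (fHbM Y)) ≤
      (1 - (minNorm Y)^2 / ((n:ℝ)^2 * (maxNorm Y)^2)) * (maxNorm Y - minNorm Y) := by
  set m := minNorm Y with hm_def
  set M := maxNorm Y with hM_def
  have hmY : ∀ i j, m ≤ Y i j := fun i j =>
    (minNorm_le_abs Y i j).trans_eq (abs_of_pos (hY i j))
  have hMY : ∀ i j, Y i j ≤ M := fun i j =>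
    (le_abs_self _).trans (abs_le_maxNorm Y i j)
  obtain ⟨a, b, hab⟩ := exists_minNorm Y hn
  have hm0 : 0 < m := by rw [hm_def, hab]; exact abs_pos.2 (hY a b).ne'
  have hmM : m ≤ M := minNorm_le_maxNorm Y hn
  have hM0 : 0 < M := lt_of_lt_of_le hm0 hmM
  have hnM : (0:ℝ) < n * M := by positivity
  have hYab : Y a b ≤ m := by rw [hm_def, hab, abs_of_pos (hY a b)]
  -- step 1: column a of Z := fHbM Y
  set δc := m * (M - m) / (n * M) with hδc
  have hδc0 : 0 ≤ δc := by
    apply div_nonneg (mul_nonneg hm0.le (by linarith)) hnM.le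
  have hstep1 : ∀ i, fHbM Y i a ≤ M - δc := fun i =>
    key_upper hn Y hY hMY hm0 hmY a b hYab hmM i
  set Z := fHbM Y with hZ
  have hZpos : ∀ i j, 0 < Z i j := fHbM_pos hn Y hY
  have hZm : ∀ i j, m ≤ Z i j := key_lower hn Y hY hmY
  have hZM : ∀ i j, Z i j ≤ M := by
    intro i j
    have := key_upper hn Y hY hMY hm0 hmY j j (hMY j j) le_rfl i
    rw [sub_self, mul_zero, zero_div, sub_zero] at this
    exact this
  -- step 2
  have hstep2 : ∀ i j, fHbM Z i j ≤ M - m * δc / (n * M) := by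
    intro i j
    have := key_upper hn Z hZpos hZM hm0 hZm j a (hstep1 j) (by linarith) i
    convert this using 2
    ring
  have hWM : maxNorm (fHbM Z) ≤ M - m * δc / (n * M) := by
    refine maxNorm_le _ hn fun i j => ?_
    rw [abs_of_pos (fHbM_pos hn Z hZpos i j)]
    exact hstep2 i j
  have hWm : m ≤ minNorm (fHbM Z) := by
    refine le_minNorm _ hn fun i j => ?_
    rw [abs_of_pos (fHbM_pos hn Z hZpos i j)]
    exact key_lower hn Z hZpos hZm i j
  have heq : M - m * δc / (n * M) - m = (1 - m^2 / ((n:ℝ)^2 * M^2)) * (M - m) := by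
    rw [hδc]
    field_simp
    ring
  linarith [hWM, hWm]

lemma iter_pos (hn : 0 < n) (Y : Matrix (Fin n) (Fin n) ℝ) (hY : ∀ i j, 0 < Y i j) :
    ∀ t, ∀ i j, 0 < (fHbM (n := n))^[t] Y i j := by
  intro t
  induction t with
  | zero => exact hY
  | succ t ih =>
    rw [Function.iterate_succ_apply']
    exact fHbM_pos hn _ ih

end steps

section conj
variable {n : ℕ}

lemma conj_fHbM (s : Fin n → ℝ) (hs : ∀ i, |s i| = 1)
    (Y : Matrix (Fin n) (Fin n) ℝ) (hY : ∀ i j, 0 < Y i j) :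
    fHbM (fun i j => s i * s j * Y i j) = fun i j => s i * s j * fHbM Y i j := by
  funext i j
  unfold fHbM
  have hnum : (∑ k, (s i * s k * Y i k) * (s j * s k * Y j k))
      = s i * s j * ∑ k, Y i k * Y j k := by
    rw [Finset.mul_sum]
    refine Finset.sum_congr rfl fun k _ => ?_
    have hk : s k * s k = 1 := by
      have := hs k
      nlinarith [abs_nonneg (s k), sq_abs (s k)]
    linear_combination (s i * s j * Y i k * Y j k) * hk
  have hden : (∑ k, |s i * s k * Y i k|) = ∑ k, |Y i k| := by
    refine Finset.sum_congr rfl fun k _ => ?_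
    rw [abs_mul, abs_mul, hs i, hs k, one_mul, one_mul]
  rw [hnum, hden, mul_div_assoc]

lemma conj_iter (s : Fin n → ℝ) (hs : ∀ i, |s i| = 1) (hn : 0 < n)
    (Y : Matrix (Fin n) (Fin n) ℝ) (hY : ∀ i j, 0 < Y i j) (t : ℕ) :
    (fHbM (n := n))^[t] (fun i j => s i * s j * Y i j)
      = fun i j => s i * s j * (fHbM (n := n))^[t] Y i j := by
  induction t with
  | zero => rfl
  | succ t ih =>
    rw [Function.iterate_succ_apply']
    refine (Function.iterate_succ_apply' _ _ _).trans ?_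
    rw [ih,
      conj_fHbM s hs _ (iter_pos hn Y hY t)]

lemma conj_maxNorm (s : Fin n → ℝ) (hs : ∀ i, |s i| = 1)
    (Y : Matrix (Fin n) (Fin n) ℝ) :
    maxNorm (fun i j => s i * s j * Y i j) = maxNorm Y := by
  unfold maxNorm
  refine iSup_congr fun i => iSup_congr fun j => ?_
  rw [abs_mul, abs_mul, hs i, hs j, one_mul, one_mul]

lemma conj_minNorm (s : Fin n → ℝ) (hs : ∀ i, |s i| = 1)
    (Y : Matrix (Fin n) (Fin n) ℝ) :
    minNorm (fun i j => s i * s j * Y i j) = minNorm Y := by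
  unfold minNorm
  refine iInf_congr fun i => iInf_congr fun j => ?_
  rw [abs_mul, abs_mul, hs i, hs j, one_mul, one_mul]

end conj

lemma sign_pm {x : ℝ} (hx : x ≠ 0) : Real.sign x = 1 ∨ Real.sign x = -1 :=
  (Real.sign_apply_eq_of_ne_zero x hx).symm

lemma sign_mul_abs' {x : ℝ} (hx : x ≠ 0) : Real.sign x * |x| = x := by
  rcases lt_or_gt_of_ne hx with h | h
  · rw [Real.sign_of_neg h, abs_of_neg h]; ring
  · rw [Real.sign_of_pos h, abs_of_pos h, one_mul]

set_option maxHeartbeats 1000000 in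
theorem fHbM_balanced_contraction_and_convergence {n : ℕ} (hn : 0 < n)
    (X : Matrix (Fin n) (Fin n) ℝ)
    (hX : ∀ i j, X i j ≠ 0)
    (hdiag : ∀ i, 0 < X i i)
    (hbal : ∀ i j k, Real.sign (X i j) * Real.sign (X j k) * Real.sign (X k i) = 1) :
    (∀ t : ℕ,
      maxNorm ((fHbM (n := n))^[t + 2] X) - minNorm ((fHbM (n := n))^[t + 2] X) ≤
        (1 - (minNorm ((fHbM (n := n))^[t] X))^2 /
              ((n : ℝ)^2 * (maxNorm ((fHbM (n := n))^[t] X))^2)) *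
          (maxNorm ((fHbM (n := n))^[t] X) - minNorm ((fHbM (n := n))^[t] X))) ∧
    (∃ C > (0 : ℝ), ∃ q : ℝ, 0 ≤ q ∧ q < 1 ∧ ∀ t : ℕ,
      maxNorm ((fHbM (n := n))^[t] X) - minNorm ((fHbM (n := n))^[t] X) ≤ C * q ^ t) ∧
    (∃ α > (0 : ℝ),
      Filter.Tendsto (fun t : ℕ => (fHbM (n := n))^[t] X) Filter.atTop
        (nhds (fun i j => α * Real.sign (X ⟨0, hn⟩ i) * Real.sign (X ⟨0, hn⟩ j)))) := by
  haveI : Nonempty (Fin n) := ⟨⟨0, hn⟩⟩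
  set z : Fin n := ⟨0, hn⟩ with hz_def
  set s : Fin n → ℝ := fun i => Real.sign (X z i) with hs_def
  have hspm : ∀ i, s i = 1 ∨ s i = -1 := fun i => sign_pm (hX z i)
  have hs1 : ∀ i, |s i| = 1 := fun i => by rcases hspm i with h | h <;> rw [h] <;> norm_num
  set Y : Matrix (Fin n) (Fin n) ℝ := fun i j => |X i j| with hY_def
  have hYpos : ∀ i j, 0 < Y i j := fun i j => abs_pos.2 (hX i j)
  have hsign : ∀ i j, Real.sign (X i j) = s i * s j := by
    intro i j
    have h1 := hbal z i j
    have h2 := hbal j z z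
    rw [Real.sign_of_pos (hdiag z)] at h2
    rcases sign_pm (hX z i) with ha | ha <;> rcases sign_pm (hX i j) with hb | hb <;>
      rcases sign_pm (hX j z) with hc | hc <;> rcases sign_pm (hX z j) with hd | hd <;>
      rw [ha, hb, hc] at h1 <;> rw [hc, hd] at h2 <;>
      rw [hs_def] <;> simp only [] <;> rw [hb, ha, hd] <;> revert h1 h2 <;> norm_num
  have hXconj : X = fun i j => s i * s j * Y i j := by
    funext i j
    rw [hY_def]
    simp only []
    rw [← hsign i j, sign_mul_abs' (hX i j)]
  have hiter : ∀ t, (fHbM (n := n))^[t] X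
      = fun i j => s i * s j * (fHbM (n := n))^[t] Y i j := by
    intro t
    rw [hXconj, conj_iter s hs1 hn Y hYpos t]
  have hmax : ∀ t, maxNorm ((fHbM (n := n))^[t] X) = maxNorm ((fHbM (n := n))^[t] Y) :=
    fun t => by rw [hiter t, conj_maxNorm s hs1]
  have hmin : ∀ t, minNorm ((fHbM (n := n))^[t] X) = minNorm ((fHbM (n := n))^[t] Y) :=
    fun t => by rw [hiter t, conj_minNorm s hs1]
  have hcontr : ∀ t : ℕ,
      maxNorm ((fHbM (n := n))^[t + 2] Y) - minNorm ((fHbM (n := n))^[t + 2] Y) ≤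
        (1 - (minNorm ((fHbM (n := n))^[t] Y))^2 /
              ((n : ℝ)^2 * (maxNorm ((fHbM (n := n))^[t] Y))^2)) *
          (maxNorm ((fHbM (n := n))^[t] Y) - minNorm ((fHbM (n := n))^[t] Y)) := by
    intro t
    have hit : (fHbM (n := n))^[t + 2] Y = fHbM (fHbM ((fHbM (n := n))^[t] Y)) := by
      rw [Function.iterate_succ_apply', Function.iterate_succ_apply']
    rw [hit]
    exact two_step hn _ (iter_pos hn Y hYpos t)
  -- abbreviations for the sequence of norms
  set mf : ℕ → ℝ := fun t => minNorm ((fHbM (n := n))^[t] Y) with hmf_def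
  set Mf : ℕ → ℝ := fun t => maxNorm ((fHbM (n := n))^[t] Y) with hMf_def
  have hmono_m : ∀ t, mf t ≤ mf (t + 1) := by
    intro t
    have := (fHbM_bounds hn _ (iter_pos hn Y hYpos t)).2.1
    rw [hmf_def]
    simpa [Function.iterate_succ_apply'] using this
  have hmono_M : ∀ t, Mf (t + 1) ≤ Mf t := by
    intro t
    have := (fHbM_bounds hn _ (iter_pos hn Y hYpos t)).2.2
    rw [hMf_def]
    simpa [Function.iterate_succ_apply'] using this
  have hmf_mono : Monotone mf := monotone_nat_of_le_succ hmono_m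
  have hMf_anti : Antitone Mf := antitone_nat_of_succ_le hmono_M
  have hmlepos : ∀ t i j, mf t ≤ (fHbM (n := n))^[t] Y i j := fun t i j =>
    (minNorm_le_abs _ i j).trans_eq (abs_of_pos (iter_pos hn Y hYpos t i j))
  have hMgepos : ∀ t i j, (fHbM (n := n))^[t] Y i j ≤ Mf t := fun t i j =>
    (le_abs_self _).trans (abs_le_maxNorm _ i j)
  have hmM : ∀ t, mf t ≤ Mf t := fun t => minNorm_le_maxNorm _ hn
  have hm0pos : 0 < mf 0 := by
    obtain ⟨a, b, hab⟩ := exists_minNorm Y hn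
    show 0 < minNorm ((fHbM (n := n))^[0] Y)
    rw [Function.iterate_zero_apply, hab]
    exact abs_pos.2 (hYpos a b).ne'
  have hmt_pos : ∀ t, 0 < mf t := fun t => lt_of_lt_of_le hm0pos (hmf_mono (Nat.zero_le t))
  have hMt_le : ∀ t, Mf t ≤ Mf 0 := fun t => hMf_anti (Nat.zero_le t)
  have hM0pos : 0 < Mf 0 := lt_of_lt_of_le hm0pos (hmM 0)
  -- the contraction ratio
  set δ : ℝ := mf 0 / (n * Mf 0) with hδ_def
  have hδpos : 0 < δ := by positivity
  have hδle : δ ≤ 1 := by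
    rw [hδ_def, div_le_one (by positivity)]
    calc mf 0 ≤ Mf 0 := hmM 0
    _ ≤ n * Mf 0 := by
        have hn1 : (1:ℝ) ≤ (n:ℝ) := by exact_mod_cast hn
        nlinarith [hM0pos]
  set q : ℝ := 1 - δ ^ 2 / 2 with hq_def
  have hq0 : 0 < q := by rw [hq_def]; nlinarith
  have hq1 : q < 1 := by rw [hq_def]; nlinarith
  have hq2 : 1 - δ ^ 2 ≤ q ^ 2 := by rw [hq_def]; nlinarith
  clear_value δ q
  have hkey : ∀ t, Mf (t + 2) - mf (t + 2) ≤ q ^ 2 * (Mf t - mf t) := by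
    intro t
    have h1 := hcontr t
    have hratio : δ ^ 2 ≤ (mf t) ^ 2 / ((n : ℝ) ^ 2 * (Mf t) ^ 2) := by
      have hMtpos : 0 < Mf t := lt_of_lt_of_le (hmt_pos t) (hmM t)
      have hnR : (0:ℝ) < (n:ℝ) := by exact_mod_cast hn
      have h1 : (mf 0) ^ 2 ≤ (mf t) ^ 2 := by nlinarith [hmf_mono (Nat.zero_le t), hm0pos]
      have h2 : (Mf t) ^ 2 ≤ (Mf 0) ^ 2 := by nlinarith [hMt_le t, hMtpos]
      rw [hδ_def, div_pow, mul_pow]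
      refine div_le_div₀ (sq_nonneg _) h1 (by positivity) ?_
      exact mul_le_mul_of_nonneg_left h2 (by positivity)
    have hD : 0 ≤ Mf t - mf t := by linarith [hmM t]
    calc Mf (t + 2) - mf (t + 2)
        ≤ (1 - (mf t) ^ 2 / ((n : ℝ) ^ 2 * (Mf t) ^ 2)) * (Mf t - mf t) := h1
      _ ≤ q ^ 2 * (Mf t - mf t) := by
          have hfac : 1 - (mf t) ^ 2 / ((n : ℝ) ^ 2 * (Mf t) ^ 2) ≤ q ^ 2 := by linarith
          exact mul_le_mul_of_nonneg_right hfac hD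
  have hDmono : ∀ t, Mf (t + 1) - mf (t + 1) ≤ Mf t - mf t := fun t => by
    linarith [hmono_m t, hmono_M t]
  set A : ℝ := (Mf 0 - mf 0) / q with hA_def
  have hgeom : ∀ t, (Mf t - mf t ≤ A * q ^ t) ∧ (Mf (t + 1) - mf (t + 1) ≤ A * q ^ (t + 1)) := by
    intro t
    induction t with
    | zero =>
      constructor
      · rw [hA_def, pow_zero, mul_one, le_div_iff₀ hq0]
        nlinarith [hmM 0]
      · rw [hA_def, pow_one, div_mul_cancel₀ _ hq0.ne']
        exact hDmono 0
    | succ t ih =>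
      refine ⟨ih.2, ?_⟩
      calc Mf (t + 2) - mf (t + 2) ≤ q ^ 2 * (Mf t - mf t) := hkey t
        _ ≤ q ^ 2 * (A * q ^ t) := by nlinarith [ih.1, sq_nonneg q]
        _ = A * q ^ (t + 2) := by ring
  -- Part 2 data
  have hApos : 0 ≤ A := div_nonneg (by linarith [hmM 0]) hq0.le
  have hfinal : ∀ t, Mf t - mf t ≤ (A + 1) * q ^ t := fun t =>
    (hgeom t).1.trans (mul_le_mul_of_nonneg_right (by linarith) (pow_nonneg hq0.le t))
  refine ⟨?_, ?_, ?_⟩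
  · intro t
    rw [hmax, hmin, hmax, hmin]
    exact hcontr t
  · exact ⟨A + 1, by linarith, q, hq0.le, hq1, fun t => by
      rw [hmax, hmin]; exact hfinal t⟩
  · -- convergence
    have hbdd : BddAbove (Set.range mf) := ⟨Mf 0, by
      rintro _ ⟨t, rfl⟩; exact (hmM t).trans (hMt_le t)⟩
    set α : ℝ := ⨆ t, mf t with hα_def
    have htm : Filter.Tendsto mf Filter.atTop (nhds α) :=
      tendsto_atTop_ciSup hmf_mono hbdd
    have hα0 : 0 < α := lt_of_lt_of_le hm0pos (le_ciSup hbdd 0)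
    have hDto0 : Filter.Tendsto (fun t => Mf t - mf t) Filter.atTop (nhds 0) := by
      have hgeo : Filter.Tendsto (fun t : ℕ => (A + 1) * q ^ t) Filter.atTop (nhds 0) := by
        have h := (tendsto_pow_atTop_nhds_zero_of_lt_one hq0.le hq1).const_mul (A + 1)
        rw [mul_zero] at h
        exact h
      exact squeeze_zero (fun t => by linarith [hmM t]) hfinal hgeo
    have htM : Filter.Tendsto Mf Filter.atTop (nhds α) := by
      have := htm.add hDto0
      rw [add_zero] at this
      exact this.congr fun t => by ring
    have hentry : ∀ i j, Filter.Tendsto (fun t => (fHbM (n := n))^[t] Y i j)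
        Filter.atTop (nhds α) := fun i j =>
      tendsto_of_tendsto_of_tendsto_of_le_of_le htm htM
        (fun t => hmlepos t i j) (fun t => hMgepos t i j)
    refine ⟨α, hα0, ?_⟩
    apply tendsto_pi_nhds.2
    intro i
    apply tendsto_pi_nhds.2
    intro j
    have h := (hentry i j).const_mul (s i * s j)
    rw [show s i * s j * α = α * s i * s j by ring] at h
    exact h.congr fun t => by rw [hiter t]
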